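/- Let λ, μ, c > 0 with μ/λ < c, and let x : [0,∞) → ℝ be differentiable with x'(t) = λ x(t)² − (λc + μ) x(t) + μc for all t ≥ 0. If x(0) ∈ (μ/λ, c), then x'(t) < 0 for all t ≥ 0, x is strictly decreasing, and x(t) → μ/λ as t → ∞; in particular the equilibrium x₂* = c is unstable: every solution starting in (μ/λ, c), however close to c, eventually leaves the interval (c − (c − μ/λ)/2, c]. -/

import Mathlib

open Set Filter Topology

/-! Both roots `μ/λ` and `c` of the right-hand side are equilibria, and the equation is linear in
the distance to either of them, so by uniqueness of solutions a trajectory starting strictly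
between them stays there. There the right-hand side is negative, so `x` decreases; and while `x`
stays above `μ/λ + ε` its speed is bounded away from zero, which forces `x → μ/λ`. -/

theorem eqOn_const_of_hasDerivAt_mul_sub {a x : ℝ → ℝ} {e t₀ t₁ : ℝ}
    (ha : ContinuousOn a (Icc t₀ t₁))
    (hx : ∀ t ∈ Icc t₀ t₁, HasDerivAt x (a t * (x t - e)) t) (h₁ : x t₁ = e) :
    EqOn x (fun _ ↦ e) (Icc t₀ t₁) := by
  obtain ⟨K, hK⟩ := isCompact_Icc.exists_bound_of_continuousOn ha
  refine ODE_solution_unique_of_mem_Icc_left (v := fun t y ↦ a t * (y - e))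
    (s := fun _ ↦ univ) (K := ⟨max K 0, le_max_right _ _⟩) (fun t ht ↦ ?_)
    (fun t ht ↦ (hx t ht).continuousAt.continuousWithinAt)
    (fun t ht ↦ (hx t (Ioc_subset_Icc_self ht)).hasDerivWithinAt) (fun _ _ ↦ mem_univ _)
    continuousOn_const (fun t _ ↦ by simpa using hasDerivWithinAt_const t (Iic t) e)
    (fun _ _ ↦ mem_univ _) h₁
  refine (LipschitzWith.of_dist_le_mul fun y z ↦ ?_).lipschitzOnWith
  rw [Real.dist_eq, Real.dist_eq, ← mul_sub, sub_sub_sub_cancel_right, abs_mul]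
  exact mul_le_mul_of_nonneg_right ((hK t (Ioc_subset_Icc_self ht)).trans (le_max_left _ _))
    (abs_nonneg _)

theorem ne_of_hasDerivAt_mul_sub {a x : ℝ → ℝ} {e : ℝ} (ha : ContinuousOn a (Ici 0))
    (hx : ∀ t ≥ 0, HasDerivAt x (a t * (x t - e)) t) (h₀ : x 0 ≠ e) : ∀ t ≥ 0, x t ≠ e :=
  fun _ ht hxt ↦ h₀ <| eqOn_const_of_hasDerivAt_mul_sub (ha.mono Icc_subset_Ici_self)
    (fun s hs ↦ hx s hs.1) hxt (left_mem_Icc.2 ht)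

theorem IsPreconnected.mapsTo_Ioo {s : Set ℝ} {f : ℝ → ℝ} {a b t₀ : ℝ} (hs : IsPreconnected s)
    (hf : ContinuousOn f s) (ht₀ : t₀ ∈ s) (hft₀ : f t₀ ∈ Ioo a b)
    (ha : ∀ t ∈ s, f t ≠ a) (hb : ∀ t ∈ s, f t ≠ b) : MapsTo f s (Ioo a b) := by
  intro t ht
  have hpre : IsPreconnected (f '' s) := hs.image f hf
  have h₀ : f t₀ ∈ f '' s := mem_image_of_mem f ht₀
  have h : f t ∈ f '' s := mem_image_of_mem f ht
  by_contra hout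
  rw [mem_Ioo, not_and_or, not_lt, not_lt] at hout
  rcases hout with hle | hge
  · obtain ⟨u, hu, hfu⟩ := hpre.Icc_subset h h₀ ⟨hle, hft₀.1.le⟩
    exact ha u hu hfu
  · obtain ⟨u, hu, hfu⟩ := hpre.Icc_subset h₀ h ⟨hft₀.2.le, hge⟩
    exact hb u hu hfu

section Riccati

variable {lam m c : ℝ} {x : ℝ → ℝ}

theorem mapsTo_Ioo_of_hasDerivAt_mul_sub_mul_sub
    (hx : ∀ t ≥ 0, HasDerivAt x (lam * (x t - m) * (x t - c)) t) (hx0 : x 0 ∈ Ioo m c) :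
    MapsTo x (Ici 0) (Ioo m c) := by
  have hcont : ContinuousOn x (Ici 0) := fun t ht ↦ (hx t ht).continuousAt.continuousWithinAt
  have hcoef : ∀ e, ContinuousOn (fun s ↦ lam * (x s - e)) (Ici 0) := fun e ↦
    continuousOn_const.mul (hcont.sub continuousOn_const)
  refine isPreconnected_Ici.mapsTo_Ioo hcont self_mem_Ici hx0 ?_ ?_
  · refine ne_of_hasDerivAt_mul_sub (hcoef c) (fun t ht ↦ ?_) hx0.1.ne'
    exact (hx t ht).congr_deriv (by ring)
  · exact ne_of_hasDerivAt_mul_sub (hcoef m) hx hx0.2.ne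

theorem mul_sub_mul_sub_neg_of_mem_Ioo (hlam : 0 < lam) {u : ℝ} (hu : u ∈ Ioo m c) :
    lam * (u - m) * (u - c) < 0 :=
  mul_neg_of_pos_of_neg (mul_pos hlam (sub_pos.2 hu.1)) (sub_neg.2 hu.2)

theorem strictAntiOn_of_hasDerivAt_mul_sub_mul_sub (hlam : 0 < lam)
    (hx : ∀ t ≥ 0, HasDerivAt x (lam * (x t - m) * (x t - c)) t) (hx0 : x 0 ∈ Ioo m c) :
    StrictAntiOn x (Ici 0) := by
  refine strictAntiOn_of_deriv_neg (convex_Ici 0)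
    (fun t ht ↦ (hx t ht).continuousAt.continuousWithinAt) fun t ht ↦ ?_
  rw [interior_Ici] at ht
  rw [(hx t ht.le).deriv]
  exact mul_sub_mul_sub_neg_of_mem_Ioo hlam
    (mapsTo_Ioo_of_hasDerivAt_mul_sub_mul_sub hx hx0 (mem_Ici.2 ht.le))

theorem tendsto_of_hasDerivAt_mul_sub_mul_sub (hlam : 0 < lam)
    (hx : ∀ t ≥ 0, HasDerivAt x (lam * (x t - m) * (x t - c)) t) (hx0 : x 0 ∈ Ioo m c) :
    Tendsto x atTop (𝓝 m) := by
  have hmaps := mapsTo_Ioo_of_hasDerivAt_mul_sub_mul_sub hx hx0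
  have hanti := (strictAntiOn_of_hasDerivAt_mul_sub_mul_sub hlam hx hx0).antitoneOn
  refine tendsto_order.2 ⟨fun a ha ↦ ?_, fun b hb ↦ ?_⟩
  · filter_upwards [eventually_ge_atTop 0] with t ht using ha.trans (hmaps ht).1
  obtain ⟨T, hT, hxT⟩ : ∃ T ≥ 0, x T < b := by
    by_contra! hge
    set δ := lam * (b - m) * (c - x 0)
    have hδ : 0 < δ := mul_pos (mul_pos hlam (sub_pos.2 hb)) (sub_pos.2 hx0.2)
    have hderiv : ∀ t ∈ interior (Ici (0 : ℝ)), deriv x t ≤ -δ := by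
      intro t ht
      replace ht : 0 ≤ t := interior_subset ht
      have hxt := hmaps ht
      have hxt0 : x t ≤ x 0 := hanti self_mem_Ici ht ht
      rw [(hx t ht).deriv, show lam * (x t - m) * (x t - c) = -(lam * (x t - m) * (c - x t))
        by ring, neg_le_neg_iff]
      exact mul_le_mul (mul_le_mul_of_nonneg_left (by linarith [hge t ht]) hlam.le)
        (by linarith) (sub_pos.2 hx0.2).le (mul_pos hlam (sub_pos.2 hxt.1)).le
    set T := (x 0 - m) / δ
    have hT : 0 ≤ T := div_nonneg (sub_pos.2 hx0.1).le hδ.le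
    have hmvt := (convex_Ici 0).image_sub_le_mul_sub_of_deriv_le
      (fun t ht ↦ (hx t ht).continuousAt.continuousWithinAt)
      (fun t ht ↦ (hx t (interior_subset ht)).differentiableAt.differentiableWithinAt)
      hderiv 0 self_mem_Ici T hT hT
    have hδT : δ * T = x 0 - m := mul_div_cancel₀ _ hδ.ne'
    linarith [(hmaps hT).1]
  filter_upwards [eventually_ge_atTop T] with t ht using
    (hanti hT (hT.trans ht) ht).trans_lt hxT

end Riccati

theorem stmt_4_general (lam mu c : ℝ) (hlam : 0 < lam)
    (x : ℝ → ℝ)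
    (hx : ∀ t ≥ (0 : ℝ),
      HasDerivAt x (lam * x t ^ 2 - (lam * c + mu) * x t + mu * c) t)
    (hx0 : x 0 ∈ Ioo (mu / lam) c) :
    (∀ t ≥ (0 : ℝ), lam * x t ^ 2 - (lam * c + mu) * x t + mu * c < 0) ∧
    StrictAntiOn x (Ici (0 : ℝ)) ∧
    Tendsto x atTop (nhds (mu / lam)) ∧
    (∃ t ≥ (0 : ℝ), x t ∉ Ioc (c - (c - mu / lam) / 2) c) := by
  have hfactor : ∀ u, lam * u ^ 2 - (lam * c + mu) * u + mu * c
      = lam * (u - mu / lam) * (u - c) := fun u ↦ by field_simp; ring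
  simp only [hfactor] at hx ⊢
  have htend := tendsto_of_hasDerivAt_mul_sub_mul_sub hlam hx hx0
  refine ⟨fun t ht ↦ mul_sub_mul_sub_neg_of_mem_Ioo hlam
      (mapsTo_Ioo_of_hasDerivAt_mul_sub_mul_sub hx hx0 ht),
    strictAntiOn_of_hasDerivAt_mul_sub_mul_sub hlam hx hx0, htend, ?_⟩
  have hmid : mu / lam < c - (c - mu / lam) / 2 := by linarith [hx0.1, hx0.2]
  obtain ⟨t, ht, hxt⟩ := ((eventually_ge_atTop 0).and (htend.eventually_lt_const hmid)).exists
  exact ⟨t, ht, fun hmem ↦ hmem.1.not_gt hxt⟩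

/-- Instability of the equilibrium `x₂* = c` in case 1 of Theorem 3.1: for `μ/λ < c`,
every solution of `x' = λ x² − (λc + μ) x + μc` starting in `(μ/λ, c)` has strictly
negative derivative, is strictly decreasing, converges to `μ/λ`, and eventually leaves
the interval `(c − (c − μ/λ)/2, c]`. -/
theorem stmt_4 (lam mu c : ℝ) (hlam : 0 < lam) (hmu : 0 < mu) (hc : 0 < c)
    (hcase : mu / lam < c)
    (x : ℝ → ℝ)
    (hx : ∀ t ≥ (0 : ℝ),
      HasDerivAt x (lam * x t ^ 2 - (lam * c + mu) * x t + mu * c) t)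
    (hx0 : x 0 ∈ Ioo (mu / lam) c) :
    (∀ t ≥ (0 : ℝ), lam * x t ^ 2 - (lam * c + mu) * x t + mu * c < 0) ∧
    StrictAntiOn x (Ici (0 : ℝ)) ∧
    Tendsto x atTop (nhds (mu / lam)) ∧
    (∃ t ≥ (0 : ℝ), x t ∉ Ioc (c - (c - mu / lam) / 2) c) :=
  stmt_4_general lam mu c hlam x hx hx0
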